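/- Let $M_1, M_2, M_3$ be distinct primes, $\chi_1$ a nontrivial multiplicative character modulo $M_1$, $\chi_2$ a nontrivial multiplicative character modulo $M_2$, and let $q$ be a positive integer with $\gcd(q, M_1 M_2 M_3) = 1$. Let $m, n$ be integers, and let $\bar{M}_3$ denote an inverse of $M_3$ modulo $qM_1$. Then the complete character sum $\mathfrak{C} = \sum_{a \bmod q M_1 M_2} \chi_1(a)\chi_2(a)\, e\Big(\tfrac{\bar{M}_3 m a}{qM_1} + \tfrac{na}{qM_1M_2}\Big)$ satisfies: $\mathfrak{C} = q\, g_{\chi_1} g_{\chi_2}\, \chi_1(qM_2M_3)\, \bar{\chi}_1(M_2 m + M_3 n)\, \chi_2(qM_1)\, \bar{\chi}_2(n)$ if $q \mid M_2 m + M_3 n$, and $\mathfrak{C} = 0$ if $q \nmid M_2 m + M_3 n$. -/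

import Mathlib

/-!
Write the phase as `K a / (q M₁ M₂)` with `K = M₂ M̄₃ m + n`. The summand is then periodic
modulo `q M₁ M₂`, and the Chinese remainder parametrization `a = M₁ M₂ α + q M₂ β + q M₁ γ`
splits the sum into `∑_α e(Kα/q)`, which is `q` or `0` according as `q ∣ K`, times the twisted
Gauss sums `∑_x χᵢ(x) e(Kx/Mᵢ) = χ̄ᵢ(K) g_{χᵢ}` weighted by `χ₁(qM₂)` and `χ₂(qM₁)`.
Since `K ≡ M̄₃ (M₂ m + M₃ n)` modulo `q M₁` and `K ≡ n` modulo `M₂`, this is the claimed value.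
-/

noncomputable def e (z : ℝ) : ℂ := Complex.exp (2 * Real.pi * Complex.I * z)

noncomputable def gaussSumE (p : ℕ) [NeZero p] (χ : MulChar (ZMod p) ℂ) : ℂ :=
  ∑ d : ZMod p, χ d * e ((d.val : ℝ) / p)

/-- The complete character sum
`𝔠 = ∑_{a mod qM₁M₂} χ₁(a)χ₂(a) e(M̄₃ma/(qM₁) + na/(qM₁M₂))`. -/
noncomputable def frakC (M₁ M₂ q : ℕ) (χ₁ : MulChar (ZMod M₁) ℂ)
    (χ₂ : MulChar (ZMod M₂) ℂ) (M₃bar m n : ℤ) : ℂ :=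
  ∑ a ∈ Finset.range (q * M₁ * M₂), χ₁ ((a : ℤ) : ZMod M₁) * χ₂ ((a : ℤ) : ZMod M₂) *
    e (((M₃bar * m * a : ℤ) : ℝ) / ((q : ℝ) * M₁) + ((n * a : ℤ) : ℝ) / ((q : ℝ) * M₁ * M₂))

open Finset Function

lemma e_add (x y : ℝ) : e (x + y) = e x * e y := by
  simp only [e, ← Complex.exp_add]
  push_cast
  ring_nf

lemma e_intCast_div (N : ℕ) [NeZero N] (k : ℤ) :
    e (k / N) = ZMod.stdAddChar (k : ZMod N) := by
  rw [ZMod.stdAddChar_coe, e]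
  push_cast
  ring_nf

lemma e_crt_div_eq_stdAddChar_mul {a b c : ℕ} [NeZero a] [NeZero b] [NeZero c] (K x y z : ℤ) :
    e ((K * (b * c * x + a * c * y + a * b * z) : ℤ) / (a * b * c : ℕ)) =
      ZMod.stdAddChar ((K * x : ℤ) : ZMod a) * ZMod.stdAddChar ((K * y : ℤ) : ZMod b) *
        ZMod.stdAddChar ((K * z : ℤ) : ZMod c) := by
  have ha : (a : ℝ) ≠ 0 := NeZero.ne _
  have hb : (b : ℝ) ≠ 0 := NeZero.ne _
  have hc : (c : ℝ) ≠ 0 := NeZero.ne _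
  rw [← e_intCast_div, ← e_intCast_div, ← e_intCast_div, ← e_add, ← e_add]
  congr 1
  push_cast
  field_simp

lemma gaussSumE_eq_gaussSum (p : ℕ) [NeZero p] (χ : MulChar (ZMod p) ℂ) :
    gaussSumE p χ = gaussSum χ ZMod.stdAddChar := by
  refine sum_congr rfl fun d _ => ?_
  rw [← Int.cast_natCast, e_intCast_div, Int.cast_natCast, ZMod.natCast_zmod_val]

lemma gaussSum_mulShift_eq_of_ne_one {F R : Type*} [Field F] [Fintype F] [CommRing R]
    [IsDomain R] {χ : MulChar F R} (hχ : χ ≠ 1) (ψ : AddChar F R) (a : F) :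
    gaussSum χ (ψ.mulShift a) = χ⁻¹ a * gaussSum χ ψ := by
  rcases eq_or_ne a 0 with rfl | ha
  · simp [gaussSum, MulChar.sum_eq_zero_of_ne_one hχ, MulChar.map_zero]
  · simpa using gaussSum_mulShift_eq χ ψ (Units.mk0 a ha)

lemma MulChar.inv_apply_mul_of_mul_eq_one {F : Type*} [Field F] [Fintype F]
    (χ : MulChar F ℂ) {a b : F} (hab : a * b = 1) (s : F) :
    χ⁻¹ (b * s) = χ a * starRingEnd ℂ (χ s) := by
  rw [map_mul, MulChar.inv_apply', inv_eq_of_mul_eq_one_left hab, starRingEnd_apply,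
    MulChar.star_apply']

lemma Finset.sum_range_eq_sum_zmod_val {M : Type*} [AddCommMonoid M] (N : ℕ) [NeZero N]
    (f : ℕ → M) : ∑ a ∈ range N, f a = ∑ x : ZMod N, f x.val :=
  sum_nbij' (↑) ZMod.val (by simp) (fun x _ => mem_range.mpr x.val_lt)
    (fun a ha => ZMod.val_cast_of_lt (mem_range.mp ha)) (fun x _ => ZMod.natCast_zmod_val x)
    (fun a ha => by rw [ZMod.val_cast_of_lt (mem_range.mp ha)])

lemma ZMod.intCast_mul_val_add_self_mul {a : ℕ} [NeZero a] (b : ℕ) (u : ZMod a) (k : ℤ) :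
    ((b * u.val + a * k : ℤ) : ZMod a) = b * u := by
  simp

lemma ZMod.bijective_intCast_mul_val_add_mul_val {a b : ℕ} [NeZero a] [NeZero b]
    (h : a.Coprime b) :
    Bijective fun x : ZMod a × ZMod b => ((b * x.1.val + a * x.2.val : ℤ) : ZMod (a * b)) := by
  rw [Fintype.bijective_iff_injective_and_card]
  refine ⟨fun x y hxy => ?_, by simp [ZMod.card]⟩
  have hxy₁ := congrArg (ZMod.castHom (dvd_mul_right a b) (ZMod a)) hxy
  have hxy₂ := congrArg (ZMod.castHom (dvd_mul_left b a) (ZMod b)) hxy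
  simp only [map_intCast, ZMod.intCast_mul_val_add_self_mul] at hxy₁
  simp only [map_intCast, add_comm ((b : ℤ) * _), ZMod.intCast_mul_val_add_self_mul] at hxy₂
  have hb : IsUnit (b : ZMod a) := (ZMod.isUnit_iff_coprime b a).mpr h.symm
  have ha : IsUnit (a : ZMod b) := (ZMod.isUnit_iff_coprime a b).mpr h
  exact Prod.ext (hb.mul_left_cancel hxy₁) (ha.mul_left_cancel hxy₂)

lemma Function.Periodic.map_val_intCast {M : Type*} {F : ℤ → M} {N : ℕ} [NeZero N]
    (hF : Periodic F N) (x : ℤ) : F (x : ZMod N).val = F x := by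
  rw [ZMod.val_intCast, Int.emod_def, mul_comm]
  simpa using hF.sub_int_mul_eq (x / N)

section Periodic

variable {M : Type*} [AddCommMonoid M] {F : ℤ → M}

lemma Function.Periodic.sum_comp_eq_sum_zmod {N : ℕ} [NeZero N] (hF : Periodic F N)
    {ι : Type*} [Fintype ι] {g : ι → ℤ} (hg : Bijective fun i => (g i : ZMod N)) :
    ∑ i, F (g i) = ∑ x : ZMod N, F x.val :=
  Fintype.sum_bijective _ hg _ _ fun i => (hF.map_val_intCast (g i)).symm

lemma Function.Periodic.sum_zmod_mul_eq {a b : ℕ} [NeZero a] [NeZero b] (h : a.Coprime b)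
    (hF : Periodic F (a * b : ℕ)) :
    ∑ x : ZMod (a * b), F x.val = ∑ u : ZMod a, ∑ v : ZMod b, F (b * u.val + a * v.val) := by
  rw [← hF.sum_comp_eq_sum_zmod (ZMod.bijective_intCast_mul_val_add_mul_val h),
    Fintype.sum_prod_type]

lemma Function.Periodic.sum_zmod_mul_mul_eq {a b c : ℕ} [NeZero a] [NeZero b] [NeZero c]
    (hab : a.Coprime b) (hac : a.Coprime c) (hbc : b.Coprime c)
    (hF : Periodic F (a * b * c : ℕ)) :
    ∑ x : ZMod (a * b * c), F x.val = ∑ u : ZMod a, ∑ v : ZMod b, ∑ w : ZMod c,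
      F (b * c * u.val + a * c * v.val + a * b * w.val) := by
  have hG : Periodic (fun y : ℤ => ∑ w : ZMod c, F (c * y + (a * b : ℕ) * w.val)) (a * b : ℕ) :=
    fun y => sum_congr rfl fun w _ => by
      rw [← hF (c * y + (a * b : ℕ) * w.val)]
      push_cast
      ring_nf
  rw [hF.sum_zmod_mul_eq (Nat.Coprime.mul_left hac hbc), hG.sum_zmod_mul_eq hab]
  push_cast
  ring_nf

end Periodic

lemma sum_range_mulChar_mul_e_eq {q M₁ M₂ : ℕ} [NeZero q] [NeZero M₁] [NeZero M₂]
    (hq₁ : q.Coprime M₁) (hq₂ : q.Coprime M₂) (h₁₂ : M₁.Coprime M₂)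
    (χ₁ : MulChar (ZMod M₁) ℂ) (χ₂ : MulChar (ZMod M₂) ℂ) (K : ℤ) :
    ∑ a ∈ range (q * M₁ * M₂), χ₁ ((a : ℤ) : ZMod M₁) * χ₂ ((a : ℤ) : ZMod M₂) *
        e ((K * a : ℤ) / (q * M₁ * M₂ : ℕ)) =
      (∑ α : ZMod q, ZMod.stdAddChar (α * (K : ZMod q))) *
        (χ₁ ((q * M₂ : ℕ) : ZMod M₁) * gaussSum χ₁ (ZMod.stdAddChar.mulShift (K : ZMod M₁))) *
        (χ₂ ((q * M₁ : ℕ) : ZMod M₂) * gaussSum χ₂ (ZMod.stdAddChar.mulShift (K : ZMod M₂))) := by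
  set F : ℤ → ℂ := fun x => χ₁ (x : ZMod M₁) * χ₂ (x : ZMod M₂) *
    e ((K * x : ℤ) / (q * M₁ * M₂ : ℕ)) with hF_def
  have hF : Periodic F (q * M₁ * M₂ : ℕ) := fun x => by
    simp only [hF_def, e_intCast_div]
    simp only [Int.cast_mul, Int.cast_add, Int.cast_natCast, ZMod.natCast_self, add_zero]
    push_cast
    simp
  rw [sum_range_eq_sum_zmod_val (q * M₁ * M₂) (f := fun a : ℕ => F a),
    (hF.sum_zmod_mul_mul_eq hq₁ hq₂ h₁₂ :)]
  simp only [gaussSum, AddChar.mulShift_apply]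
  rw [mul_sum _ _ (χ₁ _), mul_sum _ _ (χ₂ _), sum_mul_sum]
  simp only [sum_mul]
  simp only [mul_sum]
  refine sum_congr rfl fun α _ => sum_congr rfl fun β _ => sum_congr rfl fun γ _ => ?_
  simp only [hF_def, e_crt_div_eq_stdAddChar_mul]
  push_cast
  simp only [CharP.cast_eq_zero, zero_mul, mul_zero, zero_add, add_zero, ZMod.natCast_val,
    ZMod.cast_id', id_eq, map_mul]
  rw [mul_comm (K : ZMod q) α]
  ring

lemma sum_range_mulChar_mul_e_eq_ite {q M₁ M₂ : ℕ} [NeZero q] [Fact M₁.Prime] [Fact M₂.Prime]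
    (hq₁ : q.Coprime M₁) (hq₂ : q.Coprime M₂) (h₁₂ : M₁.Coprime M₂)
    {χ₁ : MulChar (ZMod M₁) ℂ} (hχ₁ : χ₁ ≠ 1) {χ₂ : MulChar (ZMod M₂) ℂ} (hχ₂ : χ₂ ≠ 1)
    (K : ℤ) :
    ∑ a ∈ range (q * M₁ * M₂), χ₁ ((a : ℤ) : ZMod M₁) * χ₂ ((a : ℤ) : ZMod M₂) *
        e ((K * a : ℤ) / (q * M₁ * M₂ : ℕ)) =
      (if (q : ℤ) ∣ K then (q : ℂ) else 0) *
        (χ₁ ((q * M₂ : ℕ) : ZMod M₁) * χ₁⁻¹ (K : ZMod M₁) * gaussSumE M₁ χ₁) *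
        (χ₂ ((q * M₁ : ℕ) : ZMod M₂) * χ₂⁻¹ (K : ZMod M₂) * gaussSumE M₂ χ₂) := by
  rw [sum_range_mulChar_mul_e_eq hq₁ hq₂ h₁₂,
    AddChar.sum_mulShift _ (ZMod.isPrimitive_stdAddChar q), ZMod.card, gaussSum_mulShift_eq_of_ne_one hχ₁, gaussSum_mulShift_eq_of_ne_one hχ₂,
    gaussSumE_eq_gaussSum, gaussSumE_eq_gaussSum]
  simp only [ZMod.intCast_zmod_eq_zero_iff_dvd, Nat.cast_ite, Nat.cast_zero]
  ring

lemma frakC_eq_sum_range (M₁ M₂ q : ℕ) [NeZero M₁] [NeZero M₂] [NeZero q]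
    (χ₁ : MulChar (ZMod M₁) ℂ) (χ₂ : MulChar (ZMod M₂) ℂ) (M₃bar m n : ℤ) :
    frakC M₁ M₂ q χ₁ χ₂ M₃bar m n =
      ∑ a ∈ range (q * M₁ * M₂), χ₁ ((a : ℤ) : ZMod M₁) * χ₂ ((a : ℤ) : ZMod M₂) *
        e (((M₂ * M₃bar * m + n) * a : ℤ) / (q * M₁ * M₂ : ℕ)) := by
  have h₁ : (M₁ : ℝ) ≠ 0 := NeZero.ne _
  have h₂ : (M₂ : ℝ) ≠ 0 := NeZero.ne _
  have hq : (q : ℝ) ≠ 0 := NeZero.ne _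
  refine sum_congr rfl fun a _ => ?_
  congr 2
  push_cast
  field_simp

theorem frakC_eval_general (M₁ M₂ M₃ : ℕ) [Fact M₁.Prime] [Fact M₂.Prime]
    (h₁₂ : M₁ ≠ M₂)
    (χ₁ : MulChar (ZMod M₁) ℂ) (hχ₁ : χ₁ ≠ 1)
    (χ₂ : MulChar (ZMod M₂) ℂ) (hχ₂ : χ₂ ≠ 1)
    (q : ℕ) (hq : 0 < q) (hcop : Nat.Coprime q (M₁ * M₂ * M₃))
    (m n M₃bar : ℤ) (hinv : (M₃ : ℤ) * M₃bar ≡ 1 [ZMOD ((q * M₁ : ℕ) : ℤ)]) :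
    (((q : ℤ) ∣ (M₂ : ℤ) * m + (M₃ : ℤ) * n) →
      frakC M₁ M₂ q χ₁ χ₂ M₃bar m n =
        (q : ℂ) * gaussSumE M₁ χ₁ * gaussSumE M₂ χ₂ *
          χ₁ (((q * M₂ * M₃ : ℕ) : ℤ) : ZMod M₁) *
          (starRingEnd ℂ) (χ₁ (((M₂ : ℤ) * m + (M₃ : ℤ) * n : ℤ) : ZMod M₁)) *
          χ₂ (((q * M₁ : ℕ) : ℤ) : ZMod M₂) *
          (starRingEnd ℂ) (χ₂ ((n : ℤ) : ZMod M₂))) ∧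
    (¬ ((q : ℤ) ∣ (M₂ : ℤ) * m + (M₃ : ℤ) * n) →
      frakC M₁ M₂ q χ₁ χ₂ M₃bar m n = 0) := by
  have : NeZero q := ⟨hq.ne'⟩
  have hq₁ : q.Coprime M₁ := hcop.coprime_dvd_right ⟨M₂ * M₃, by ring⟩
  have hq₂ : q.Coprime M₂ := hcop.coprime_dvd_right ⟨M₁ * M₃, by ring⟩
  have h₁₂' : M₁.Coprime M₂ := (Nat.coprime_primes Fact.out Fact.out).mpr h₁₂
  set S : ℤ := M₂ * m + M₃ * n with hS
  have hinv_mod : ∀ d : ℕ, d ∣ q * M₁ → (M₃ * M₃bar : ZMod d) = 1 := fun d hd => by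
    simpa using (ZMod.intCast_eq_intCast_iff _ _ d).mpr
      (hinv.of_dvd (Int.natCast_dvd_natCast.mpr hd))
  have hK : ∀ d : ℕ, d ∣ q * M₁ → ((M₂ * M₃bar * m + n : ℤ) : ZMod d) = M₃bar * S :=
    fun d hd => by
      rw [hS]
      push_cast
      linear_combination (-(n : ZMod d)) * hinv_mod d hd
  have hK_dvd : (q : ℤ) ∣ M₂ * M₃bar * m + n ↔ (q : ℤ) ∣ S := by
    rw [← ZMod.intCast_zmod_eq_zero_iff_dvd, ← ZMod.intCast_zmod_eq_zero_iff_dvd,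
      hK q (dvd_mul_right q M₁),
      (IsUnit.of_mul_eq_one_right _ (hinv_mod q (dvd_mul_right q M₁))).mul_right_eq_zero]
  have hχ₂K : χ₂⁻¹ ((M₂ * M₃bar * m + n : ℤ) : ZMod M₂) = starRingEnd ℂ (χ₂ n) := by
    rw [starRingEnd_apply, MulChar.star_apply']
    push_cast
    simp
  rw [frakC_eq_sum_range, sum_range_mulChar_mul_e_eq_ite hq₁ hq₂ h₁₂' hχ₁ hχ₂,
    hK M₁ (dvd_mul_left M₁ q), χ₁.inv_apply_mul_of_mul_eq_one (hinv_mod M₁ (dvd_mul_left M₁ q)),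
    hχ₂K]
  constructor
  · intro h
    rw [if_pos (hK_dvd.mpr h)]
    push_cast
    simp only [map_mul]
    ring
  · intro h
    rw [if_neg (mt hK_dvd.mp h)]
    ring

/-- Evaluation of `𝔠`: it vanishes unless `q ∣ M₂m + M₃n`, in which case it equals
`q g_{χ₁} g_{χ₂} χ₁(qM₂M₃) χ̄₁(M₂m + M₃n) χ₂(qM₁) χ̄₂(n)`. -/
theorem frakC_eval (M₁ M₂ M₃ : ℕ) [Fact M₁.Prime] [Fact M₂.Prime] [Fact M₃.Prime]
    (h₁₂ : M₁ ≠ M₂) (h₁₃ : M₁ ≠ M₃) (h₂₃ : M₂ ≠ M₃)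
    (χ₁ : MulChar (ZMod M₁) ℂ) (hχ₁ : χ₁ ≠ 1)
    (χ₂ : MulChar (ZMod M₂) ℂ) (hχ₂ : χ₂ ≠ 1)
    (q : ℕ) (hq : 0 < q) (hcop : Nat.Coprime q (M₁ * M₂ * M₃))
    (m n M₃bar : ℤ) (hinv : (M₃ : ℤ) * M₃bar ≡ 1 [ZMOD ((q * M₁ : ℕ) : ℤ)]) :
    (((q : ℤ) ∣ (M₂ : ℤ) * m + (M₃ : ℤ) * n) →
      frakC M₁ M₂ q χ₁ χ₂ M₃bar m n =
        (q : ℂ) * gaussSumE M₁ χ₁ * gaussSumE M₂ χ₂ *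
          χ₁ (((q * M₂ * M₃ : ℕ) : ℤ) : ZMod M₁) *
          (starRingEnd ℂ) (χ₁ (((M₂ : ℤ) * m + (M₃ : ℤ) * n : ℤ) : ZMod M₁)) *
          χ₂ (((q * M₁ : ℕ) : ℤ) : ZMod M₂) *
          (starRingEnd ℂ) (χ₂ ((n : ℤ) : ZMod M₂))) ∧
    (¬ ((q : ℤ) ∣ (M₂ : ℤ) * m + (M₃ : ℤ) * n) →
      frakC M₁ M₂ q χ₁ χ₂ M₃bar m n = 0) :=
  frakC_eval_general M₁ M₂ M₃ h₁₂ χ₁ hχ₁ χ₂ hχ₂ q hq hcop m n M₃bar hinv
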